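/- arXiv:2211.09048 — 2 statements merged into one kernel-verified Lean document; each statement's English description precedes it below -/
import Mathlib

section
/- Let n be a positive even integer and G = P_n ∨ P_n (the join of two disjoint paths on n vertices). If p ∈ (0,1) and an integer k > max{2, n/2} satisfy (n/2)(1−p)^{k−2} + n·p^{k−1−n/2}·(p + (k − n/2)(1−p)) ≤ 1, then G is (k, 1/4)-flexible, and hence χ_flex(G) ≤ k. -/
open SimpleGraph Finset

variable {V : Type*}

/-- A proper list coloring: colors chosen from lists, adjacent vertices differ. -/
def ProperListColoring (G : SimpleGraph V) (L : V → Finset ℕ) (f : V → ℕ) : Prop :=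
  (∀ v, f v ∈ L v) ∧ ∀ ⦃u w⦄, G.Adj u w → f u ≠ f w

/-- The triple (G,L,r) with request domain D is ε-satisfiable. -/
def Satisfiable (G : SimpleGraph V) (L : V → Finset ℕ) (D : Finset V) (r : V → ℕ)
    (ε : ℝ) : Prop :=
  ∃ f : V → ℕ, ProperListColoring G L f ∧
    ε * (D.card : ℝ) ≤ ((D.filter fun v => f v = r v).card : ℝ)

/-- G is (k,ε)-flexible. -/
def Flexible (G : SimpleGraph V) (k : ℕ) (ε : ℝ) : Prop :=
  ∀ (L : V → Finset ℕ), (∀ v, (L v).card = k) →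
    ∀ (D : Finset V) (r : V → ℕ), D.Nonempty → (∀ v ∈ D, r v ∈ L v) →
      Satisfiable G L D r ε

/-- Independence number of the subgraph induced on `S`. -/
noncomputable def indepNumOn (G : SimpleGraph V) (S : Finset V) : ℕ := by
  classical
  exact (S.powerset.filter fun I => ∀ u ∈ I, ∀ w ∈ I, ¬ G.Adj u w).sup Finset.card

/-- The Hall ratio of a graph. -/
noncomputable def hallRatio (G : SimpleGraph V) [Fintype V] : ℝ :=
  sSup {x : ℝ | ∃ S : Finset V, S.Nonempty ∧ x = (S.card : ℝ) / (indepNumOn G S : ℝ)}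

/-- The list flexibility number: least k such that G is (k, 1/ρ(G))-flexible. -/
noncomputable def flexNumber (G : SimpleGraph V) [Fintype V] : ℕ :=
  sInf {k | Flexible G k (1 / hallRatio G)}

/-- d-degeneracy via an ordering. -/
def Degenerate (G : SimpleGraph V) (d : ℕ) : Prop :=
  ∃ f : V → ℕ, Function.Injective f ∧ ∀ v, ({u | G.Adj v u ∧ f u < f v}).ncard ≤ d

/-- s-choosability. -/
def Choosable (G : SimpleGraph V) (s : ℕ) : Prop :=
  ∀ L : V → Finset ℕ, (∀ v, (L v).card = s) → ∃ f, ProperListColoring G L f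

/-- List chromatic number. -/
noncomputable def listChromNum (G : SimpleGraph V) : ℕ := sInf {s | Choosable G s}

/-- Chromatic number as a natural number. -/
noncomputable def chromNat (G : SimpleGraph V) : ℕ := G.chromaticNumber.toNat

/-- The square of a graph. -/
def square (G : SimpleGraph V) : SimpleGraph V :=
  SimpleGraph.fromRel (fun u w => G.Adj u w ∨ ∃ x, G.Adj u x ∧ G.Adj x w)

/-- The join of two disjoint copies of the same graph. -/
def joinCopies (G : SimpleGraph V) : SimpleGraph (V ⊕ V) where
  Adj x y := match x, y with
    | Sum.inl u, Sum.inl w => G.Adj u w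
    | Sum.inr u, Sum.inr w => G.Adj u w
    | _, _ => True
  symm := ⟨by rintro (u|u) (w|w) h <;> first | exact h.symm | trivial⟩
  loopless := ⟨by rintro (u|u) h <;> exact G.irrefl h⟩

/-- The list packing number. -/
noncomputable def listPackingNumber (G : SimpleGraph V) : ℕ :=
  sInf {k | 0 < k ∧ ∀ L : V → Finset ℕ, (∀ v, (L v).card = k) →
    ∃ f : Fin k → V → ℕ, (∀ i, ProperListColoring G L (f i)) ∧
      ∀ i j, i ≠ j → ∀ v, f i v ≠ f j v}

/-- Binary entropy function. -/
noncomputable def binEnt (p : ℝ) : ℝ :=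
  -p * Real.logb 2 p - (1 - p) * Real.logb 2 (1 - p)


section Helpers

noncomputable def wgt (p : ℝ) (X S : Finset ℕ) : ℝ := (1-p)^S.card * p^((X \ S).card)

lemma sum_wgt (p : ℝ) (X : Finset ℕ) : ∑ S ∈ X.powerset, wgt p X S = 1 := by
  have h := Finset.prod_add (fun _ : ℕ => (1-p)) (fun _ : ℕ => p) X
  simp only [prod_const] at h
  have h1 : ((1:ℝ)-p+p) = 1 := by ring
  rw [h1, one_pow] at h
  unfold wgt
  exact h.symm

lemma wgt_split (p : ℝ) (T : Finset ℕ) (E : Finset ℕ → Prop) [DecidablePred E] :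
    ∀ Y : Finset ℕ, Disjoint T Y →
      ∑ S ∈ (T ∪ Y).powerset.filter (fun S => E (S ∩ T)), wgt p (T ∪ Y) S
        = ∑ U ∈ T.powerset.filter E, wgt p T U := by
  intro Y
  induction Y using Finset.induction_on with
  | empty =>
    intro _
    rw [Finset.union_empty]
    apply Finset.sum_congr
    · apply Finset.filter_congr
      intro S hS
      rw [Finset.mem_powerset] at hS
      rw [Finset.inter_eq_left.mpr hS]
    · intros; rfl
  | @insert x Y hx ih =>
    intro hdisj
    have hxT : x ∉ T := fun h => (Finset.disjoint_left.mp hdisj h (mem_insert_self x Y))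
    have hdY : Disjoint T Y := hdisj.mono_right (Finset.subset_insert x Y)
    have hxB : x ∉ T ∪ Y := by
      simp only [Finset.mem_union]
      rintro (h|h)
      · exact hxT h
      · exact hx h
    have hset : T ∪ insert x Y = insert x (T ∪ Y) := by
      ext y; simp only [Finset.mem_insert, Finset.mem_union]; tauto
    rw [hset]
    rw [Finset.sum_filter]
    rw [Finset.sum_powerset_insert hxB]
    have key : ∀ S ∈ (T ∪ Y).powerset,
        ((if E ((S : Finset ℕ) ∩ T) then wgt p (insert x (T ∪ Y)) S else 0)
          + (if E ((insert x S) ∩ T) then wgt p (insert x (T ∪ Y)) (insert x S) else 0))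
        = (if E (S ∩ T) then wgt p (T ∪ Y) S else 0) := by
      intro S hS
      rw [Finset.mem_powerset] at hS
      have hxS : x ∉ S := fun h => hxB (hS h)
      have h1 : (insert x S) ∩ T = S ∩ T := by
        rw [Finset.insert_inter_of_notMem hxT]
      rw [h1]
      by_cases hE : E (S ∩ T)
      · simp only [if_pos hE]
        have e1 : wgt p (insert x (T ∪ Y)) S = p * wgt p (T ∪ Y) S := by
          unfold wgt
          have : insert x (T ∪ Y) \ S = insert x ((T ∪ Y) \ S) := by
            rw [Finset.insert_sdiff_of_notMem _ hxS]
          rw [this, Finset.card_insert_of_notMem (by simp [hxB])]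
          ring
        have e2 : wgt p (insert x (T ∪ Y)) (insert x S) = (1-p) * wgt p (T ∪ Y) S := by
          unfold wgt
          have : insert x (T ∪ Y) \ insert x S = (T ∪ Y) \ S := by
            ext y
            simp only [Finset.mem_sdiff, Finset.mem_insert]
            constructor
            · rintro ⟨h|h, h2⟩
              · exact absurd (Or.inl h) h2
              · exact ⟨h, fun hy => h2 (Or.inr hy)⟩
            · rintro ⟨ha, hb⟩
              refine ⟨Or.inr ha, ?_⟩
              rintro (hc|hc)
              · exact hxB (hc ▸ ha)
              · exact hb hc
          rw [this, Finset.card_insert_of_notMem hxS]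
          ring
        rw [e1, e2]; ring
      · simp only [if_neg hE]; ring
    rw [← Finset.sum_add_distrib]
    rw [Finset.sum_congr rfl key]
    rw [← Finset.sum_filter]
    exact ih hdY

lemma wgt_event (p : ℝ) (X T : Finset ℕ) (hT : T ⊆ X) (E : Finset ℕ → Prop) [DecidablePred E] :
    ∑ S ∈ X.powerset.filter (fun S => E (S ∩ T)), wgt p X S
      = ∑ U ∈ T.powerset.filter E, wgt p T U := by
  have h := wgt_split p T E (X \ T) (Finset.disjoint_sdiff)
  rwa [Finset.union_sdiff_of_subset hT] at h

lemma wgt_nonneg {p : ℝ} (hp0 : 0 ≤ p) (hp1 : p ≤ 1) (X S : Finset ℕ) : 0 ≤ wgt p X S := by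
  unfold wgt
  apply mul_nonneg <;> apply pow_nonneg <;> linarith

lemma measure_superset (p : ℝ) (X T : Finset ℕ) (hT : T ⊆ X) :
    ∑ S ∈ X.powerset.filter (fun S => T ⊆ S), wgt p X S = (1-p)^T.card := by
  classical
  have h1 : X.powerset.filter (fun S => T ⊆ S) = X.powerset.filter (fun S => T ⊆ S ∩ T) := by
    apply Finset.filter_congr
    intro S _
    simp [Finset.subset_inter_iff]
  rw [h1, wgt_event p X T hT (fun U => T ⊆ U)]
  have h2 : T.powerset.filter (fun U => T ⊆ U) = {T} := by
    ext U
    simp only [Finset.mem_filter, Finset.mem_powerset, Finset.mem_singleton]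
    constructor
    · rintro ⟨h3, h4⟩; exact Finset.Subset.antisymm h3 h4
    · rintro rfl; exact ⟨Finset.Subset.refl _, Finset.Subset.refl _⟩
  rw [h2, Finset.sum_singleton]
  unfold wgt
  simp

lemma measure_small_inter (p : ℝ) (X T : Finset ℕ) (hT : T ⊆ X) :
    ∑ S ∈ X.powerset.filter (fun S => (S ∩ T).card ≤ 1), wgt p X S
      = p^T.card + T.card * (1-p) * p^(T.card - 1) := by
  classical
  rw [wgt_event p X T hT (fun U => U.card ≤ 1)]
  have h2 : T.powerset.filter (fun U => U.card ≤ 1) = insert ∅ (T.image fun c => {c}) := by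
    ext U
    simp only [Finset.mem_filter, Finset.mem_powerset, Finset.mem_insert, Finset.mem_image]
    constructor
    · rintro ⟨hsub, hcard⟩
      interval_cases h : U.card
      · left; exact Finset.card_eq_zero.mp h
      · right
        obtain ⟨c, rfl⟩ := Finset.card_eq_one.mp h
        exact ⟨c, hsub (Finset.mem_singleton_self c), rfl⟩
    · rintro (rfl | ⟨c, hc, rfl⟩)
      · simp
      · simp [Finset.singleton_subset_iff.mpr hc]
  rw [h2, Finset.sum_insert (by simp)]
  rw [Finset.sum_image (by intro a _ b _ h; exact Finset.singleton_injective h)]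
  have h3 : ∀ c ∈ T, wgt p T {c} = (1-p) * p^(T.card - 1) := by
    intro c hc
    unfold wgt
    rw [Finset.card_singleton, pow_one, Finset.sdiff_singleton_eq_erase,
      Finset.card_erase_of_mem hc]
  rw [Finset.sum_congr rfl h3, Finset.sum_const, nsmul_eq_mul]
  unfold wgt
  simp [mul_assoc]

lemma sum_biUnion_le_sum {ι : Type*} [DecidableEq ι] (s : Finset ι) (t : ι → Finset (Finset ℕ))
    (f : Finset ℕ → ℝ) (hf : ∀ x, 0 ≤ f x) :
    ∑ x ∈ s.biUnion t, f x ≤ ∑ i ∈ s, ∑ x ∈ t i, f x := by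
  classical
  induction s using Finset.induction_on with
  | empty => simp
  | @insert a s ha ih =>
    rw [Finset.biUnion_insert, Finset.sum_insert ha]
    have h1 : ∑ x ∈ t a ∪ s.biUnion t, f x ≤ ∑ x ∈ t a, f x + ∑ x ∈ s.biUnion t, f x := by
      have := Finset.sum_union_inter (s₁ := t a) (s₂ := s.biUnion t) (f := f)
      have h2 : 0 ≤ ∑ x ∈ t a ∩ s.biUnion t, f x := Finset.sum_nonneg fun x _ => hf x
      linarith
    exact h1.trans (by linarith [ih])


lemma card_parity (m : ℕ) (c : ℕ) (hc : c < 2) :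
    ((Finset.univ : Finset (Fin (2*m))).filter fun i => i.val % 2 = c).card = m := by
  classical
  have h : ((Finset.univ : Finset (Fin (2*m))).filter fun i => i.val % 2 = c)
      = (Finset.univ : Finset (Fin m)).image (fun j => (⟨2*j.val+c, by omega⟩ : Fin (2*m))) := by
    ext i
    simp only [Finset.mem_filter, Finset.mem_univ, true_and, Finset.mem_image]
    constructor
    · intro hi
      refine ⟨⟨i.val / 2, by omega⟩, ?_⟩
      apply Fin.ext
      simp only
      omega
    · rintro ⟨j, _, rfl⟩
      simp only
      omega
  rw [h, Finset.card_image_of_injective _ (fun a b hab => by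
    have := Fin.val_eq_of_eq hab
    simp only at this
    exact Fin.ext (by omega))]
  simp

def nbrFin (n : ℕ) (i : Fin n) : Finset (Fin n) :=
  (Finset.univ : Finset (Fin n)).filter fun j => j.val + 1 = i.val ∨ i.val + 1 = j.val

lemma mem_nbrFin {n : ℕ} {i j : Fin n} : j ∈ nbrFin n i ↔ (pathGraph n).Adj i j := by
  rw [nbrFin, Finset.mem_filter, pathGraph_adj]
  simp [or_comm, eq_comm]

lemma path_deg_le (n : ℕ) (i : Fin n) : (nbrFin n i).card ≤ 2 := by
  have h := Finset.card_le_card_of_injOn (f := fun j : Fin n => decide (j.val = i.val + 1))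
    (s := nbrFin n i)
    (t := (Finset.univ : Finset Bool)) (fun a _ => Finset.mem_univ _) ?_
  · simpa using h
  · intro a ha b hb hab
    simp only [nbrFin, Finset.coe_filter, Set.mem_setOf_eq] at ha hb
    simp only [decide_eq_decide] at hab
    apply Fin.ext
    rcases ha.2 with h1 | h1 <;> rcases hb.2 with h2 | h2 <;> omega

noncomputable def greedyPath (M' : ℕ → Finset ℕ) (h : ∀ j, 2 ≤ (M' j).card) : ℕ → ℕ
  | 0 => (M' 0).min' (Finset.card_pos.mp (by have := h 0; omega))
  | (j+1) => ((M' (j+1)).erase (greedyPath M' h j)).min' (Finset.card_pos.mp (by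
      have h1 := h (j+1)
      have h2 := Finset.pred_card_le_card_erase (s := M' (j+1)) (a := greedyPath M' h j)
      omega))

lemma greedyPath_mem (M' : ℕ → Finset ℕ) (h : ∀ j, 2 ≤ (M' j).card) (j : ℕ) :
    greedyPath M' h j ∈ M' j := by
  cases j with
  | zero => exact Finset.min'_mem _ _
  | succ j => exact Finset.mem_of_mem_erase (Finset.min'_mem _ _)

lemma greedyPath_ne (M' : ℕ → Finset ℕ) (h : ∀ j, 2 ≤ (M' j).card) (j : ℕ) :
    greedyPath M' h (j+1) ≠ greedyPath M' h j :=
  Finset.ne_of_mem_erase (Finset.min'_mem _ _)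

lemma path_choosable (n : ℕ) (M : Fin n → Finset ℕ) (hM : ∀ j, 2 ≤ (M j).card) :
    ∃ g : Fin n → ℕ, (∀ j, g j ∈ M j) ∧ ∀ j j', (pathGraph n).Adj j j' → g j ≠ g j' := by
  classical
  set M' : ℕ → Finset ℕ := fun j => if hj : j < n then M ⟨j, hj⟩ else {0, 1} with hM'def
  have hM' : ∀ j, 2 ≤ (M' j).card := by
    intro j
    simp only [hM'def]
    split
    · exact hM _
    · simp
  refine ⟨fun j => greedyPath M' hM' j.val, fun j => ?_, fun j j' hadj => ?_⟩
  · have h := greedyPath_mem M' hM' j.val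
    simp only [hM'def, dif_pos j.isLt] at h
    simpa using h
  · rw [pathGraph_adj] at hadj
    show greedyPath M' hM' j.val ≠ greedyPath M' hM' j'.val
    rcases hadj with h | h
    · rw [← h]
      exact (greedyPath_ne M' hM' j.val).symm
    · rw [← h]
      exact greedyPath_ne M' hM' j'.val


lemma sum_union_le_real (s t : Finset (Finset ℕ)) (f : Finset ℕ → ℝ) (hf : ∀ x, 0 ≤ f x) :
    ∑ x ∈ s ∪ t, f x ≤ ∑ x ∈ s, f x + ∑ x ∈ t, f x := by
  have h := Finset.sum_union_inter (s₁ := s) (s₂ := t) (f := f)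
  have h2 : 0 ≤ ∑ x ∈ s ∩ t, f x := Finset.sum_nonneg fun x _ => hf x
  linarith

lemma core (m : ℕ) (hmpos : 0 < m)
    (p : ℝ) (hp0 : 0 < p) (hp1 : p < 1)
    (k : ℕ) (hk2 : 2 < k) (hkm : m < k)
    (hineq : (m:ℝ) * (1-p)^(k-2)
        + (2*(m:ℝ)) * (p^(k-m) + ((k-m : ℕ):ℝ) * (1-p) * p^(k-m-1)) ≤ 1)
    (L : Fin (2*m) ⊕ Fin (2*m) → Finset ℕ) (hL : ∀ v, (L v).card = k)
    (D : Finset (Fin (2*m) ⊕ Fin (2*m))) (r : Fin (2*m) ⊕ Fin (2*m) → ℕ)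
    (hr : ∀ v ∈ D, r v ∈ L v) (c : ℕ) (hc : c < 2) :
    ∃ f, ProperListColoring (joinCopies (pathGraph (2*m))) L f ∧
      ∀ i : Fin (2*m), i.val % 2 = c → Sum.inl i ∈ D → f (Sum.inl i) = r (Sum.inl i) := by
  classical
  have hLne : ∀ v, (L v).Nonempty := fun v => Finset.card_pos.mp (by rw [hL]; omega)
  -- planned colors on the request-parity class
  set a : Fin (2*m) → ℕ :=
    fun i => if Sum.inl i ∈ D then r (Sum.inl i) else (L (Sum.inl i)).min' (hLne _) with ha_def
  have ha : ∀ i, a i ∈ L (Sum.inl i) := by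
    intro i
    by_cases h : Sum.inl i ∈ D
    · rw [ha_def]; simp only [if_pos h]; exact hr _ h
    · rw [ha_def]; simp only [if_neg h]; exact Finset.min'_mem _ _
  set P : Finset (Fin (2*m)) := Finset.univ.filter (fun i => i.val % 2 = c) with hP
  set Q : Finset (Fin (2*m)) := Finset.univ.filter (fun i => ¬ (i.val % 2 = c)) with hQ
  have hPcard : P.card = m := card_parity m c hc
  have hQcard : Q.card = m := by
    have h := Finset.card_filter_add_card_filter_not
      (s := (Finset.univ : Finset (Fin (2*m)))) (p := fun i => i.val % 2 = c)
    rw [← hP, ← hQ] at h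
    simp only [Finset.card_univ, Fintype.card_fin] at h
    omega
  set A : Finset ℕ := P.image a with hA
  have hAcard : A.card ≤ m := le_trans Finset.card_image_le (le_of_eq hPcard)
  set X : Finset ℕ := Finset.univ.biUnion L with hX
  have hLX : ∀ v, L v ⊆ X := fun v => Finset.subset_biUnion_of_mem L (Finset.mem_univ v)
  -- witness sets for the union bound
  have hTex : ∀ i : Fin (2*m), ∃ T,
      T ⊆ L (Sum.inl i) \ ((nbrFin (2*m) i).image a) ∧ T.card = k - 2 := by
    intro i
    refine Finset.exists_subset_card_eq ?_
    have h1 : ((nbrFin (2*m) i).image a).card ≤ 2 :=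
      le_trans Finset.card_image_le (path_deg_le (2*m) i)
    have h2 := Finset.card_sdiff_add_card_inter (L (Sum.inl i)) ((nbrFin (2*m) i).image a)
    have h3 : (L (Sum.inl i) ∩ ((nbrFin (2*m) i).image a)).card ≤ 2 :=
      le_trans (Finset.card_le_card Finset.inter_subset_right) h1
    rw [hL] at h2; omega
  choose T hTsub hTcard using hTex
  have hTex' : ∀ j : Fin (2*m), ∃ T', T' ⊆ L (Sum.inr j) \ A ∧ T'.card = k - m := by
    intro j
    refine Finset.exists_subset_card_eq ?_
    have h2 := Finset.card_sdiff_add_card_inter (L (Sum.inr j)) A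
    have h3 : (L (Sum.inr j) ∩ A).card ≤ m :=
      le_trans (Finset.card_le_card Finset.inter_subset_right) hAcard
    rw [hL] at h2; omega
  choose T' hT'sub hT'card using hTex'
  have hTX : ∀ i, T i ⊆ X := fun i =>
    (hTsub i).trans (Finset.sdiff_subset.trans (hLX _))
  have hT'X : ∀ j, T' j ⊆ X := fun j =>
    (hT'sub j).trans (Finset.sdiff_subset.trans (hLX _))
  -- existence of a good reserved set S
  obtain ⟨S, hgoodL, hgoodR⟩ : ∃ S : Finset ℕ,
      (∀ i : Fin (2*m), ¬ (i.val % 2 = c) →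
        (L (Sum.inl i) \ ((nbrFin (2*m) i).image a ∪ S)).Nonempty) ∧
      (∀ j : Fin (2*m), 2 ≤ ((L (Sum.inr j) \ A) ∩ S).card) := by
    by_contra hcon
    push_neg at hcon
    set j1 : Fin (2*m) := ⟨1, by omega⟩ with hj1
    set badL : Fin (2*m) → Finset (Finset ℕ) :=
      fun i => X.powerset.filter (fun S => T i ⊆ S) with hbadL
    set badR : Fin (2*m) → Finset (Finset ℕ) :=
      fun j => X.powerset.filter (fun S => (S ∩ T' j).card ≤ 1) with hbadR
    set Bad : Finset (Finset ℕ) :=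
      Q.biUnion badL ∪ (((Finset.univ : Finset (Fin (2*m))).erase j1).biUnion badR
        ∪ (badR j1).erase ∅) with hBad
    have hcover : X.powerset ⊆ Bad := by
      intro S hS
      by_cases hAs : ∀ i : Fin (2*m), ¬ (i.val % 2 = c) →
          (L (Sum.inl i) \ ((nbrFin (2*m) i).image a ∪ S)).Nonempty
      · obtain ⟨j, hj⟩ := hcon S hAs
        have hj' : (S ∩ T' j).card ≤ 1 := by
          have hsub : S ∩ T' j ⊆ (L (Sum.inr j) \ A) ∩ S := by
            intro x hx
            rw [Finset.mem_inter] at hx ⊢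
            exact ⟨hT'sub j hx.2, hx.1⟩
          have h4 := Finset.card_le_card hsub
          omega
        by_cases hSe : S = ∅
        · refine Finset.mem_union_right _ (Finset.mem_union_left _ ?_)
          refine Finset.mem_biUnion.mpr ⟨⟨0, by omega⟩, ?_, ?_⟩
          · refine Finset.mem_erase.mpr ⟨?_, Finset.mem_univ _⟩
            rw [hj1]
            intro hcontra
            have := Fin.val_eq_of_eq hcontra
            simp at this
          · rw [hbadR]
            refine Finset.mem_filter.mpr ⟨hS, ?_⟩
            subst hSe; simp
        · by_cases hjj : j = j1
          · refine Finset.mem_union_right _ (Finset.mem_union_right _ ?_)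
            refine Finset.mem_erase.mpr ⟨hSe, ?_⟩
            rw [hbadR]
            refine Finset.mem_filter.mpr ⟨hS, ?_⟩
            rw [← hjj]; exact hj'
          · refine Finset.mem_union_right _ (Finset.mem_union_left _ ?_)
            refine Finset.mem_biUnion.mpr ⟨j, Finset.mem_erase.mpr ⟨hjj, Finset.mem_univ _⟩, ?_⟩
            rw [hbadR]
            exact Finset.mem_filter.mpr ⟨hS, hj'⟩
      · push_neg at hAs
        obtain ⟨i, hi1, hi2⟩ := hAs
        refine Finset.mem_union_left _ ?_
        refine Finset.mem_biUnion.mpr ⟨i, ?_, ?_⟩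
        · rw [hQ]; exact Finset.mem_filter.mpr ⟨Finset.mem_univ _, hi1⟩
        · rw [hbadL]
          refine Finset.mem_filter.mpr ⟨hS, ?_⟩
          have hemp : L (Sum.inl i) \ ((nbrFin (2*m) i).image a ∪ S) = ∅ :=
            hi2
          have hsub : L (Sum.inl i) ⊆ (nbrFin (2*m) i).image a ∪ S :=
            Finset.sdiff_eq_empty_iff_subset.mp hemp
          intro x hx
          have hx' := hTsub i hx
          rw [Finset.mem_sdiff] at hx'
          rcases Finset.mem_union.mp (hsub hx'.1) with h | h
          · exact absurd h hx'.2
          · exact h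
    -- numeric contradiction
    have hnn : ∀ Z, 0 ≤ wgt p X Z := wgt_nonneg (le_of_lt hp0) (le_of_lt hp1) X
    have h1 : (1:ℝ) ≤ ∑ Z ∈ Bad, wgt p X Z := by
      rw [← sum_wgt p X]
      exact Finset.sum_le_sum_of_subset_of_nonneg hcover (fun Z _ _ => hnn Z)
    set E : ℝ := p^(k-m) + ((k-m : ℕ):ℝ) * (1-p) * p^(k-m-1) with hE
    have hbadLval : ∀ i : Fin (2*m), ∑ Z ∈ badL i, wgt p X Z = (1-p)^(k-2) := by
      intro i
      rw [hbadL]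
      rw [measure_superset p X (T i) (hTX i), hTcard i]
    have hbadRval : ∀ j : Fin (2*m), ∑ Z ∈ badR j, wgt p X Z = E := by
      intro j
      rw [hbadR]
      rw [measure_small_inter p X (T' j) (hT'X j), hT'card j, hE]
    have hempmem : ∅ ∈ badR j1 := by
      rw [hbadR]
      exact Finset.mem_filter.mpr ⟨Finset.mem_powerset.mpr (Finset.empty_subset X), by simp⟩
    have hwempty : wgt p X ∅ = p ^ X.card := by
      unfold wgt; simp
    have hEnn : 0 ≤ E := by
      rw [hE]
      have h5 : (0:ℝ) ≤ p := le_of_lt hp0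
      have h6 : (0:ℝ) ≤ 1 - p := by linarith
      positivity
    have h2 : ∑ Z ∈ Bad, wgt p X Z ≤
        (m:ℝ) * (1-p)^(k-2) + ((2*(m:ℝ) - 1) * E + (E - p ^ X.card)) := by
      rw [hBad]
      refine le_trans (sum_union_le_real _ _ _ hnn) ?_
      gcongr
      · refine le_trans (sum_biUnion_le_sum Q badL _ hnn) ?_
        rw [Finset.sum_congr rfl (fun i _ => hbadLval i), Finset.sum_const, hQcard,
          nsmul_eq_mul]
      · refine le_trans (sum_union_le_real _ _ _ hnn) ?_
        gcongr
        · refine le_trans (sum_biUnion_le_sum _ badR _ hnn) ?_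
          rw [Finset.sum_congr rfl (fun j _ => hbadRval j), Finset.sum_const,
            Finset.card_erase_of_mem (Finset.mem_univ _), nsmul_eq_mul]
          simp only [Finset.card_univ, Fintype.card_fin]
          have h7 : ((2*m - 1 : ℕ):ℝ) = 2*(m:ℝ) - 1 := by
            push_cast [Nat.cast_sub (by omega : 1 ≤ 2*m)]; ring
          rw [h7]
        · have h3 := Finset.sum_erase_add (badR j1) (wgt p X) hempmem
          rw [hwempty] at h3
          rw [hbadRval j1] at h3
          linarith
    have hppos : 0 < p ^ X.card := pow_pos hp0 _
    linarith
  -- build the coloring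
  obtain ⟨g, hgmem, hgne⟩ := path_choosable (2*m) (fun j => (L (Sum.inr j) \ A) ∩ S) hgoodR
  set f : Fin (2*m) ⊕ Fin (2*m) → ℕ := Sum.elim
    (fun i => if h : i.val % 2 = c then a i
      else (L (Sum.inl i) \ ((nbrFin (2*m) i).image a ∪ S)).min' (hgoodL i h))
    (fun j => g j) with hf
  have hfl : ∀ i : Fin (2*m), ¬ (i.val % 2 = c) →
      f (Sum.inl i) ∈ L (Sum.inl i) \ ((nbrFin (2*m) i).image a ∪ S) := by
    intro i h
    rw [hf]
    simp only [Sum.elim_inl, dif_neg h]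
    exact Finset.min'_mem _ _
  have hflc : ∀ i : Fin (2*m), i.val % 2 = c → f (Sum.inl i) = a i := by
    intro i h
    rw [hf]; simp only [Sum.elim_inl, dif_pos h]
  have hfr : ∀ j : Fin (2*m), f (Sum.inr j) ∈ (L (Sum.inr j) \ A) ∩ S := by
    intro j; rw [hf]; simp only [Sum.elim_inr]; exact hgmem j
  refine ⟨f, ⟨?_, ?_⟩, ?_⟩
  · -- membership
    rintro (i | j)
    · by_cases h : i.val % 2 = c
      · rw [hflc i h]; exact ha i
      · exact (Finset.mem_sdiff.mp (hfl i h)).1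
    · exact (Finset.mem_sdiff.mp (Finset.mem_inter.mp (hfr j)).1).1
  · -- properness
    rintro (i | j) (i' | j') hadj
    · -- left-left
      have hadj' : (pathGraph (2*m)).Adj i i' := hadj
      have hpar : i.val % 2 ≠ i'.val % 2 := by
        rw [pathGraph_adj] at hadj'
        omega
      by_cases hci : i.val % 2 = c <;> by_cases hci' : i'.val % 2 = c
      · omega
      · rw [hflc i hci]
        intro heq
        have h1 := hfl i' hci'
        rw [Finset.mem_sdiff] at h1
        apply h1.2
        apply Finset.mem_union_left
        refine Finset.mem_image.mpr ⟨i, ?_, heq⟩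
        exact mem_nbrFin.mpr hadj'.symm
      · rw [hflc i' hci']
        intro heq
        have h1 := hfl i hci
        rw [Finset.mem_sdiff] at h1
        apply h1.2
        apply Finset.mem_union_left
        refine Finset.mem_image.mpr ⟨i', ?_, heq.symm⟩
        exact mem_nbrFin.mpr hadj'
      · omega
    · -- left-right
      have h2 := hfr j'
      rw [Finset.mem_inter, Finset.mem_sdiff] at h2
      by_cases hci : i.val % 2 = c
      · rw [hflc i hci]
        intro heq
        apply h2.1.2
        rw [← heq]
        refine Finset.mem_image.mpr ⟨i, ?_, rfl⟩
        rw [hP]; exact Finset.mem_filter.mpr ⟨Finset.mem_univ _, hci⟩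
      · intro heq
        have h1 := hfl i hci
        rw [Finset.mem_sdiff] at h1
        exact h1.2 (Finset.mem_union_right _ (heq ▸ h2.2))
    · -- right-left
      have h2 := hfr j
      rw [Finset.mem_inter, Finset.mem_sdiff] at h2
      by_cases hci : i'.val % 2 = c
      · rw [hflc i' hci]
        intro heq
        apply h2.1.2
        rw [heq]
        refine Finset.mem_image.mpr ⟨i', ?_, rfl⟩
        rw [hP]; exact Finset.mem_filter.mpr ⟨Finset.mem_univ _, hci⟩
      · intro heq
        have h1 := hfl i' hci
        rw [Finset.mem_sdiff] at h1
        exact h1.2 (Finset.mem_union_right _ (heq.symm ▸ h2.2))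
    · -- right-right
      have hadj' : (pathGraph (2*m)).Adj j j' := hadj
      rw [hf]; simp only [Sum.elim_inr]
      exact hgne j j' hadj'
  · -- requests
    intro i hi hiD
    rw [hflc i hi, ha_def]
    simp only [if_pos hiD]


def kap {m : ℕ} : Fin (2*m) ⊕ Fin (2*m) → Bool × Bool :=
  Sum.elim (fun i => (false, decide (i.val % 2 = 1))) (fun i => (true, decide (i.val % 2 = 1)))

lemma kap_adj {m : ℕ} {u w : Fin (2*m) ⊕ Fin (2*m)}
    (h : (joinCopies (pathGraph (2*m))).Adj u w) : kap u ≠ kap w := by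
  rcases u with i | i <;> rcases w with i' | i'
  · have h' : (pathGraph (2*m)).Adj i i' := h
    rw [pathGraph_adj] at h'
    simp only [kap, Sum.elim_inl, Prod.mk.injEq, ne_eq, not_and]
    intro _
    simp only [decide_eq_decide]
    omega
  · simp [kap]
  · simp [kap]
  · have h' : (pathGraph (2*m)).Adj i i' := h
    rw [pathGraph_adj] at h'
    simp only [kap, Sum.elim_inr, Prod.mk.injEq, ne_eq, not_and]
    intro _
    simp only [decide_eq_decide]
    omega

lemma exists_big_fiber {m : ℕ} (S : Finset (Fin (2*m) ⊕ Fin (2*m))) :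
    ∃ b : Bool × Bool, S.card ≤ 4 * (S.filter (fun v => kap v = b)).card := by
  classical
  obtain ⟨b, -, hmax⟩ := Finset.exists_max_image (Finset.univ : Finset (Bool × Bool))
    (fun b => (S.filter (fun v => kap v = b)).card) ⟨(false, false), Finset.mem_univ _⟩
  refine ⟨b, ?_⟩
  have h := Finset.card_eq_sum_card_fiberwise
    (f := kap) (s := S) (t := Finset.univ) (fun x _ => Finset.mem_univ _)
  rw [h]
  have h2 : ∑ b' ∈ (Finset.univ : Finset (Bool × Bool)), (S.filter (fun v => kap v = b')).card
      ≤ ∑ _b' ∈ (Finset.univ : Finset (Bool × Bool)), (S.filter (fun v => kap v = b)).card :=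
    Finset.sum_le_sum (fun b' _ => hmax b' (Finset.mem_univ _))
  simpa using h2

lemma le_indepNumOn {V : Type*} (G : SimpleGraph V) (S I : Finset V) (hIS : I ⊆ S)
    (hind : ∀ u ∈ I, ∀ w ∈ I, ¬ G.Adj u w) : I.card ≤ indepNumOn G S := by
  unfold indepNumOn
  refine Finset.le_sup (f := Finset.card) ?_
  simp only [Finset.mem_filter, Finset.mem_powerset]
  exact ⟨hIS, hind⟩

lemma indep_side_card_le {m : ℕ} (I : Finset (Fin (2*m) ⊕ Fin (2*m)))
    (hind : ∀ u ∈ I, ∀ w ∈ I, ¬ (joinCopies (pathGraph (2*m))).Adj u w) : I.card ≤ m := by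
  classical
  have key : ∀ u ∈ I, ∀ w ∈ I,
      (Sum.elim Fin.val Fin.val u) / 2 = (Sum.elim Fin.val Fin.val w) / 2 →
      (u.isLeft = w.isLeft) → u = w := by
    rintro (i|i) hu (i'|i') hw heq hside <;> simp only [Sum.elim_inl, Sum.elim_inr] at heq <;>
      simp only [Sum.isLeft] at hside
    · by_cases hii : i = i'
      · rw [hii]
      · exfalso
        have hne : i.val ≠ i'.val := fun h => hii (Fin.ext h)
        have hadj : (pathGraph (2*m)).Adj i i' := by
          rw [pathGraph_adj]; omega
        exact hind _ hu _ hw hadj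
    · simp at hside
    · simp at hside
    · by_cases hii : i = i'
      · rw [hii]
      · exfalso
        have hne : i.val ≠ i'.val := fun h => hii (Fin.ext h)
        have hadj : (pathGraph (2*m)).Adj i i' := by
          rw [pathGraph_adj]; omega
        exact hind _ hu _ hw hadj
  -- all elements of I lie on one side
  have hside : ∀ u ∈ I, ∀ w ∈ I, u.isLeft = w.isLeft := by
    rintro (i|i) hu (i'|i') hw <;> simp only [Sum.isLeft]
    · exfalso; exact hind _ hu _ hw trivial
    · exfalso; exact hind _ hu _ hw trivial
  have hinj : Set.InjOn (fun v => (Sum.elim Fin.val Fin.val v) / 2) (I : Set (Fin (2*m) ⊕ Fin (2*m))) := by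
    intro u hu w hw heq
    exact key u (by simpa using hu) w (by simpa using hw) heq
      (hside u (by simpa using hu) w (by simpa using hw))
  have hmap : ∀ v ∈ I, (Sum.elim Fin.val Fin.val v) / 2 ∈ Finset.range m := by
    rintro (i|i) _ <;> simp only [Sum.elim_inl, Sum.elim_inr, Finset.mem_range] <;>
      have := i.isLt <;> omega
  have := Finset.card_le_card_of_injOn _ hmap hinj
  simpa using this

lemma indepNumOn_univ_eq {m : ℕ} (hm : 0 < m) :
    indepNumOn (joinCopies (pathGraph (2*m))) Finset.univ = m := by
  classical
  apply le_antisymm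
  · unfold indepNumOn
    apply Finset.sup_le
    intro I hI
    simp only [Finset.mem_filter, Finset.mem_powerset] at hI
    exact indep_side_card_le I hI.2
  · set I0 : Finset (Fin (2*m) ⊕ Fin (2*m)) :=
      ((Finset.univ : Finset (Fin (2*m))).filter fun i => i.val % 2 = 0).image Sum.inl with hI0
    have hcard : I0.card = m := by
      rw [hI0, Finset.card_image_of_injective _ Sum.inl_injective]
      exact card_parity m 0 (by omega)
    have h2 : I0.card ≤ indepNumOn (joinCopies (pathGraph (2*m))) Finset.univ := by
      apply le_indepNumOn
      · exact Finset.subset_univ _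
      · intro u hu w hw hadj
        rw [hI0, Finset.mem_image] at hu hw
        obtain ⟨i, hi, rfl⟩ := hu
        obtain ⟨i', hi', rfl⟩ := hw
        rw [Finset.mem_filter] at hi hi'
        have h' : (pathGraph (2*m)).Adj i i' := hadj
        rw [pathGraph_adj] at h'
        omega
    omega

lemma hallRatio_eq {m : ℕ} (hm : 0 < m) :
    hallRatio (joinCopies (pathGraph (2*m))) = 4 := by
  classical
  haveI hne : Nonempty (Fin (2*m) ⊕ Fin (2*m)) := ⟨Sum.inl ⟨0, by omega⟩⟩
  apply IsGreatest.csSup_eq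
  constructor
  · refine ⟨Finset.univ, Finset.univ_nonempty, ?_⟩
    rw [indepNumOn_univ_eq hm, Finset.card_univ]
    rw [Fintype.card_sum, Fintype.card_fin]
    have hm' : (m:ℝ) ≠ 0 := Nat.cast_ne_zero.mpr (by omega)
    push_cast
    field_simp
    ring
  · rintro x ⟨S, hSne, rfl⟩
    obtain ⟨b, hb⟩ := exists_big_fiber S
    have h1 : (S.filter (fun v => kap v = b)).card
        ≤ indepNumOn (joinCopies (pathGraph (2*m))) S := by
      apply le_indepNumOn
      · exact Finset.filter_subset _ _
      · intro u hu w hw hadj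
        rw [Finset.mem_filter] at hu hw
        exact kap_adj hadj (hu.2.trans hw.2.symm)
    have hS1 : 1 ≤ S.card := Finset.card_pos.mpr hSne
    have hα : 0 < indepNumOn (joinCopies (pathGraph (2*m))) S := by omega
    rw [div_le_iff₀ (by exact_mod_cast hα)]
    have : S.card ≤ 4 * indepNumOn (joinCopies (pathGraph (2*m))) S := by omega
    exact_mod_cast this

end Helpers

/-- sufficient probabilistic condition for P_n ∨ P_n to be
(k, 1/4)-flexible. -/
theorem stmt18 (n : ℕ) (hn : 0 < n) (heven : Even n)
    (p : ℝ) (hp : p ∈ Set.Ioo (0 : ℝ) 1)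
    (k : ℕ) (hk : max 2 (n / 2) < k)
    (hineq : ((n : ℝ) / 2) * (1 - p) ^ (k - 2) +
        (n : ℝ) * p ^ (k - 1 - n / 2) *
          (p + ((k : ℝ) - (n : ℝ) / 2) * (1 - p)) ≤ 1) :
    Flexible (joinCopies (pathGraph n)) k ((1 : ℝ) / 4) ∧
    flexNumber (joinCopies (pathGraph n)) ≤ k := by
  classical
  obtain ⟨m0, hm0⟩ := heven
  have hm2 : n = 2 * m0 := by omega
  subst hm2
  have hmpos : 0 < m0 := by omega
  have hk2 : 2 < k := lt_of_le_of_lt (le_max_left _ _) hk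
  have hkm : m0 < k := by
    have := lt_of_le_of_lt (le_max_right _ _) hk
    omega
  have hkmle : m0 ≤ k := le_of_lt hkm
  -- convert the numeric hypothesis
  have hineq' : (m0:ℝ) * (1-p)^(k-2)
      + (2*(m0:ℝ)) * (p^(k-m0) + ((k-m0 : ℕ):ℝ) * (1-p) * p^(k-m0-1)) ≤ 1 := by
    have e1 : k - 1 - (2*m0) / 2 = k - m0 - 1 := by omega
    rw [e1] at hineq
    have e2 : ((2*m0:ℕ):ℝ)/2 = (m0:ℝ) := by push_cast; ring
    rw [e2] at hineq
    have e3 : ((2*m0:ℕ):ℝ) = 2*(m0:ℝ) := by push_cast; ring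
    rw [e3] at hineq
    have e4 : ((k-m0:ℕ):ℝ) = (k:ℝ) - (m0:ℝ) := by
      rw [Nat.cast_sub hkmle]
    rw [e4]
    have e5 : p^(k-m0) = p^(k-m0-1) * p := by
      rw [← pow_succ]
      congr 1
      omega
    rw [e5]
    have h9 : (m0:ℝ) * (1-p)^(k-2)
        + (2*(m0:ℝ)) * (p^(k-m0-1)*p + ((k:ℝ) - (m0:ℝ)) * (1-p) * p^(k-m0-1))
        = (m0:ℝ) * (1-p)^(k-2)
        + 2*(m0:ℝ) * p^(k-m0-1) * (p + ((k:ℝ) - (m0:ℝ)) * (1-p)) := by ring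
    rw [h9]
    exact hineq
  have hflex : Flexible (joinCopies (pathGraph (2*m0))) k ((1:ℝ)/4) := by
    intro L hL D r hD hr
    obtain ⟨b, hb⟩ := exists_big_fiber D
    set c : ℕ := if b.2 then 1 else 0 with hc_def
    have hc : c < 2 := by rw [hc_def]; split <;> omega
    have hparity : ∀ i : Fin (2*m0), decide (i.val % 2 = 1) = b.2 → i.val % 2 = c := by
      intro i hi
      rw [hc_def]
      rcases hbb : b.2
      · rw [hbb] at hi
        simp only [decide_eq_false_iff_not] at hi
        simp only [Bool.false_eq_true, if_false]
        omega
      · rw [hbb] at hi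
        simp only [decide_eq_true_eq] at hi
        simp only [if_true]
        omega
    rcases hb1 : b.1
    · -- requests concentrated on the left copy
      obtain ⟨f, hproper, hreq⟩ :=
        core m0 hmpos p hp.1 hp.2 k hk2 hkm hineq' L hL D r hr c hc
      refine ⟨f, hproper, ?_⟩
      have hsub : D.filter (fun v => kap v = b) ⊆ D.filter (fun v => f v = r v) := by
        intro v hv
        rw [Finset.mem_filter] at hv ⊢
        refine ⟨hv.1, ?_⟩
        rcases hv' : v with i | i
        · rw [hv'] at hv
          have h1 : ((false : Bool), decide (i.val % 2 = 1)) = b := hv.2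
          have h2 : decide (i.val % 2 = 1) = b.2 := by rw [← h1]
          exact hreq i (hparity i h2) hv.1
        · exfalso
          rw [hv'] at hv
          have h1 : ((true : Bool), decide (i.val % 2 = 1)) = b := hv.2
          have h2 : (true : Bool) = b.1 := by rw [← h1]
          rw [hb1] at h2
          exact Bool.noConfusion h2
      have hcard := Finset.card_le_card hsub
      have hnat : D.card ≤ 4 * (D.filter (fun v => f v = r v)).card := by omega
      have hreal : (D.card : ℝ) ≤ 4 * ((D.filter (fun v => f v = r v)).card : ℝ) := by
        exact_mod_cast hnat
      linarith
    · -- requests concentrated on the right copy: use the swap symmetry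
      have hadjsw : ∀ u w, (joinCopies (pathGraph (2*m0))).Adj u w →
          (joinCopies (pathGraph (2*m0))).Adj (Sum.swap u) (Sum.swap w) := by
        rintro (i|i) (i'|i') h
        · exact h
        · trivial
        · trivial
        · exact h
      obtain ⟨f', hproper', hreq'⟩ :=
        core m0 hmpos p hp.1 hp.2 k hk2 hkm hineq'
          (fun v => L (Sum.swap v)) (fun v => hL _)
          (D.image Sum.swap) (fun v => r (Sum.swap v))
          (by
            intro v hv
            rw [Finset.mem_image] at hv
            obtain ⟨u, hu, rfl⟩ := hv
            simp only [Sum.swap_swap]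
            exact hr u hu) c hc
      refine ⟨fun v => f' (Sum.swap v), ⟨?_, ?_⟩, ?_⟩
      · intro v
        have h1 := hproper'.1 (Sum.swap v)
        simp only [Sum.swap_swap] at h1
        exact h1
      · intro u w h
        exact hproper'.2 (hadjsw u w h)
      · have hsub : D.filter (fun v => kap v = b)
            ⊆ D.filter (fun v => f' (Sum.swap v) = r v) := by
          intro v hv
          rw [Finset.mem_filter] at hv ⊢
          refine ⟨hv.1, ?_⟩
          rcases hv' : v with i | i
          · exfalso
            rw [hv'] at hv
            have h1 : ((false : Bool), decide (i.val % 2 = 1)) = b := hv.2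
            have h2 : (false : Bool) = b.1 := by rw [← h1]
            rw [hb1] at h2
            exact Bool.noConfusion h2
          · rw [hv'] at hv
            have h1 : ((true : Bool), decide (i.val % 2 = 1)) = b := hv.2
            have h2 : decide (i.val % 2 = 1) = b.2 := by rw [← h1]
            have h3 : Sum.inl i ∈ D.image Sum.swap :=
              Finset.mem_image.mpr ⟨Sum.inr i, hv.1, rfl⟩
            have h4 := hreq' i (hparity i h2) h3
            exact h4
        have hcard := Finset.card_le_card hsub
        have hnat : D.card ≤ 4 * (D.filter (fun v => f' (Sum.swap v) = r v)).card := by omega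
        have hreal : (D.card : ℝ)
            ≤ 4 * ((D.filter (fun v => f' (Sum.swap v) = r v)).card : ℝ) := by
          exact_mod_cast hnat
        linarith
  refine ⟨hflex, ?_⟩
  unfold flexNumber
  apply Nat.sInf_le
  simp only [Set.mem_setOf_eq]
  rw [hallRatio_eq hmpos]
  exact hflex
end

section
/- For every positive even integer n with n ≥ 50, χ_flex(P_n ∨ P_n) ≤ ⌈n/2 + ln(n)⌉; that is, the join of two disjoint n-vertex paths is (⌈n/2 + ln n⌉, 1/4)-flexible. -/
open SimpleGraph Finset

variable {V : Type*}

section Core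
open Finset

/-- pick an element of a finset (min), 0 if empty -/
def pick (s : Finset ℕ) : ℕ := if h : s.Nonempty then s.min' h else 0

lemma pick_mem {s : Finset ℕ} (h : s.Nonempty) : pick s ∈ s := by
  rw [pick, dif_pos h]; exact s.min'_mem h

lemma pick_spec {s : Finset ℕ} (h : 3 ≤ s.card) (a b : ℕ) :
    pick ((s.erase a).erase b) ∈ s ∧ pick ((s.erase a).erase b) ≠ a ∧
      pick ((s.erase a).erase b) ≠ b := by
  have h1 : s.card - 1 ≤ (s.erase a).card := Finset.pred_card_le_card_erase
  have h2 : (s.erase a).card - 1 ≤ ((s.erase a).erase b).card :=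
    Finset.pred_card_le_card_erase
  have hne : ((s.erase a).erase b).Nonempty := Finset.card_pos.mp (by omega)
  have hm := pick_mem hne
  rw [Finset.mem_erase] at hm
  obtain ⟨hb, hm⟩ := hm
  rw [Finset.mem_erase] at hm
  exact ⟨hm.2, hm.1, hb⟩

/-- greedy path coloring respecting precolored independent set J -/
def buildCol (ℓ : ℕ → Finset ℕ) (J : ℕ → Prop) [DecidablePred J] (c : ℕ → ℕ) : ℕ → ℕ
  | 0 => if J 0 then c 0 else pick (((ℓ 0).erase (c 1)).erase (c 1))
  | (i+1) => if J (i+1) then c (i+1) else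
      pick (((ℓ (i+1)).erase (buildCol ℓ J c i)).erase (c (i+2)))

lemma buildCol_spec (n : ℕ) (ℓ : ℕ → Finset ℕ) (J : ℕ → Prop) [DecidablePred J] (c : ℕ → ℕ)
    (h3 : ∀ i < n, 3 ≤ (ℓ i).card)
    (hJc : ∀ i, J i → c i ∈ ℓ i)
    (hJJ : ∀ i, J i → ¬ J (i+1)) :
    (∀ i < n, buildCol ℓ J c i ∈ ℓ i) ∧
    (∀ i, i + 1 < n → buildCol ℓ J c i ≠ buildCol ℓ J c (i+1)) ∧
    (∀ i, J i → buildCol ℓ J c i = c i) := by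
  have hJeq : ∀ i, J i → buildCol ℓ J c i = c i := by
    intro i hJ
    cases i with
    | zero => rw [buildCol, if_pos hJ]
    | succ j => rw [buildCol, if_pos hJ]
  have hmem : ∀ i < n, buildCol ℓ J c i ∈ ℓ i := by
    intro i hi
    cases i with
    | zero =>
      rw [buildCol]
      by_cases hJ : J 0
      · rw [if_pos hJ]; exact hJc 0 hJ
      · rw [if_neg hJ]; exact (pick_spec (h3 0 hi) _ _).1
    | succ j =>
      rw [buildCol]
      by_cases hJ : J (j+1)
      · rw [if_pos hJ]; exact hJc _ hJ
      · rw [if_neg hJ]; exact (pick_spec (h3 _ hi) _ _).1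
  refine ⟨hmem, ?_, hJeq⟩
  intro i hi
  by_cases hJ : J (i+1)
  · -- g (i+1) = c (i+1), and g i avoided c (i+1)
    rw [hJeq _ hJ]
    have hJi : ¬ J i := fun h => hJJ i h hJ
    cases i with
    | zero =>
      rw [buildCol, if_neg hJi]
      exact (pick_spec (h3 0 (by omega)) _ _).2.2
    | succ j =>
      rw [buildCol, if_neg hJi]
      exact (pick_spec (h3 (j+1) (by omega)) _ _).2.2
  · rw [show buildCol ℓ J c (i+1) = pick (((ℓ (i+1)).erase (buildCol ℓ J c i)).erase (c (i+2)))
      by rw [buildCol, if_neg hJ]]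
    exact fun h => (pick_spec (h3 (i+1) hi) _ _).2.1 h.symm

/-- sparse (independent-in-path) subset of at least half size -/
lemma exists_sparse_subset (A : Finset ℕ) :
    ∃ I ⊆ A, A.card ≤ 2 * I.card ∧ ∀ x ∈ I, ∀ y ∈ I, x ≠ y → x + 1 ≠ y := by
  induction A using Finset.strongInduction with
  | _ A ih =>
    rcases A.eq_empty_or_nonempty with rfl | hA
    · exact ⟨∅, by simp⟩
    · set a := A.min' hA with ha
      set A' := (A.erase a).erase (a+1) with hA'
      have hss : A' ⊂ A := by
        apply Finset.ssubset_of_subset_of_ssubset (Finset.erase_subset _ _)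
        exact Finset.erase_ssubset (A.min'_mem hA)
      obtain ⟨I', hI'sub, hI'card, hI'sp⟩ := ih A' hss
      have hge : ∀ y ∈ A', a + 2 ≤ y := by
        intro y hy
        rw [hA', Finset.mem_erase, Finset.mem_erase] at hy
        have := A.min'_le y hy.2.2
        omega
      have haI' : a ∉ I' := fun h => by have := hge a (hI'sub h); omega
      refine ⟨insert a I', ?_, ?_, ?_⟩
      · intro x hx
        rcases Finset.mem_insert.mp hx with rfl | hx
        · exact A.min'_mem hA
        · exact ((Finset.erase_subset _ _).trans (Finset.erase_subset _ _)) (hI'sub hx)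
      · rw [Finset.card_insert_of_notMem haI']
        have h1 : A.card ≤ (A.erase a).card + 1 := by
          rw [Finset.card_erase_of_mem (A.min'_mem hA)]
          have : 0 < A.card := Finset.card_pos.mpr hA
          omega
        have h2 : (A.erase a).card ≤ A'.card + 1 := by
          rw [hA']
          by_cases h : a + 1 ∈ A.erase a
          · rw [Finset.card_erase_of_mem h]
            have : 0 < (A.erase a).card := Finset.card_pos.mpr ⟨a+1, h⟩
            omega
          · rw [Finset.erase_eq_of_notMem h]; omega
        omega
      · intro x hx y hy hxy
        rcases Finset.mem_insert.mp hx with rfl | hx <;>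
          rcases Finset.mem_insert.mp hy with rfl | hy
        · omega
        · have := hge y (hI'sub hy); omega
        · have := hge x (hI'sub hx); omega
        · exact hI'sp x hx y hy hxy

lemma pairing_count (C : Finset ℕ) (m : ℕ) (X : Finset ℕ → ℕ)
    (hX : ∀ S ⊆ C, X S + X (C \ S) = m) :
    2 ^ C.card ≤ 2 * (C.powerset.filter (fun S => m ≤ 2 * X S)).card := by
  classical
  have hsplit := Finset.card_filter_add_card_filter_not
    (s := C.powerset) (p := fun S => m ≤ 2 * X S)
  have hinj : (C.powerset.filter (fun S => ¬ m ≤ 2 * X S)).card ≤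
      (C.powerset.filter (fun S => m ≤ 2 * X S)).card := by
    apply Finset.card_le_card_of_injOn (fun S => C \ S)
    · intro S hS
      rw [Finset.mem_coe, Finset.mem_filter, Finset.mem_powerset] at hS ⊢
      obtain ⟨h1, h2⟩ := hS
      have := hX S h1
      exact ⟨Finset.sdiff_subset, by dsimp only; omega⟩
    · intro S hS T hT h
      have h' : C \ S = C \ T := h
      simp only [Finset.mem_coe, Finset.mem_filter, Finset.mem_powerset] at hS hT
      rw [← Finset.sdiff_sdiff_eq_self hS.1, h', Finset.sdiff_sdiff_eq_self hT.1]
  rw [← Finset.card_powerset]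
  omega

lemma badL_count (C L : Finset ℕ) (hL : L ⊆ C) :
    (C.powerset.filter (fun S => (L ∩ S).card ≤ 2)).card
      ≤ (L.powerset.filter (fun T => T.card ≤ 2)).card * 2 ^ (C.card - L.card) := by
  classical
  have key : (C.powerset.filter (fun S => (L ∩ S).card ≤ 2)).card ≤
      ((L.powerset.filter (fun T => T.card ≤ 2)) ×ˢ (C \ L).powerset).card := by
    apply Finset.card_le_card_of_injOn (fun S => (L ∩ S, S \ L))
    · intro S hS
      rw [Finset.mem_coe, Finset.mem_filter, Finset.mem_powerset] at hS
      rw [Finset.mem_coe, Finset.mem_product, Finset.mem_filter, Finset.mem_powerset, Finset.mem_powerset]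
      exact ⟨⟨Finset.inter_subset_left, hS.2⟩, Finset.sdiff_subset_sdiff hS.1 le_rfl⟩
    · intro S hS T hT h
      have h' : (L ∩ S, S \ L) = (L ∩ T, T \ L) := h
      rw [Prod.mk.injEq] at h'
      rw [← Finset.sdiff_union_inter S L, ← Finset.sdiff_union_inter T L,
        Finset.inter_comm S L, Finset.inter_comm T L, h'.1, h'.2]
  rw [Finset.card_product, Finset.card_powerset, Finset.card_sdiff_of_subset hL] at key
  exact key

lemma badR_count (C L : Finset ℕ) (hL : L ⊆ C) :
    (C.powerset.filter (fun S => (L \ S).card ≤ 2)).card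
      ≤ (L.powerset.filter (fun T => T.card ≤ 2)).card * 2 ^ (C.card - L.card) := by
  classical
  have key : (C.powerset.filter (fun S => (L \ S).card ≤ 2)).card ≤
      ((L.powerset.filter (fun T => T.card ≤ 2)) ×ˢ (C \ L).powerset).card := by
    apply Finset.card_le_card_of_injOn (fun S => (L \ S, S \ L))
    · intro S hS
      rw [Finset.mem_coe, Finset.mem_filter, Finset.mem_powerset] at hS
      rw [Finset.mem_coe, Finset.mem_product, Finset.mem_filter, Finset.mem_powerset, Finset.mem_powerset]
      exact ⟨⟨Finset.sdiff_subset, hS.2⟩, Finset.sdiff_subset_sdiff hS.1 le_rfl⟩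
    · intro S hS T hT h
      have h' : (L \ S, S \ L) = (L \ T, T \ L) := h
      rw [Prod.mk.injEq] at h'
      have e1 : L \ (L \ S) = L ∩ S := sdiff_sdiff_right_self
      have e2 : L \ (L \ T) = L ∩ T := sdiff_sdiff_right_self
      rw [← Finset.sdiff_union_inter S L, ← Finset.sdiff_union_inter T L,
        Finset.inter_comm S L, Finset.inter_comm T L, ← e1, ← e2, h'.1, h'.2]
  rw [Finset.card_product, Finset.card_powerset, Finset.card_sdiff_of_subset hL] at key
  exact key

lemma small_subsets_card (L : Finset ℕ) (hk : 2 ≤ L.card) :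
    (L.powerset.filter (fun T => T.card ≤ 2)).card ≤ L.card * L.card := by
  classical
  have hsub : L.powerset.filter (fun T => T.card ≤ 2) ⊆
      (Finset.powersetCard 0 L ∪ Finset.powersetCard 1 L) ∪ Finset.powersetCard 2 L := by
    intro T hT
    rw [Finset.mem_filter, Finset.mem_powerset] at hT
    rw [Finset.mem_union, Finset.mem_union, Finset.mem_powersetCard,
      Finset.mem_powersetCard, Finset.mem_powersetCard]
    obtain ⟨hT1, hT2⟩ := hT
    interval_cases h : T.card
    · exact Or.inl (Or.inl ⟨hT1, rfl⟩)
    · exact Or.inl (Or.inr ⟨hT1, rfl⟩)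
    · exact Or.inr ⟨hT1, rfl⟩
  have h1 := Finset.card_le_card hsub
  have h2 := Finset.card_union_le (Finset.powersetCard 0 L ∪ Finset.powersetCard 1 L)
    (Finset.powersetCard 2 L)
  have h3 := Finset.card_union_le (Finset.powersetCard 0 L) (Finset.powersetCard 1 L)
  set k := L.card with hkdef
  have e0 : (Finset.powersetCard 0 L).card = 1 := by
    rw [Finset.card_powersetCard, Nat.choose_zero_right]
  have e1 : (Finset.powersetCard 1 L).card = k := by
    rw [Finset.card_powersetCard, Nat.choose_one_right]
  have e2 : (Finset.powersetCard 2 L).card * 2 ≤ k * (k - 1) := by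
    rw [Finset.card_powersetCard, Nat.choose_two_right]
    exact Nat.div_mul_le_self _ 2
  have e3 : ∀ q : ℕ, 1 ≤ q → q * (q - 1) + q = q * q := by
    intro q hq
    obtain ⟨j, rfl⟩ : ∃ j, q = j + 1 := ⟨q - 1, by omega⟩
    simp only [Nat.add_sub_cancel]
    ring
  have e4 := e3 k (by omega)
  set d := (Finset.powersetCard 2 L).card
  nlinarith [h1, h2, h3, e0, e1, e2, e4, hk]

lemma pow6_lt_two_pow {n : ℕ} (hn : 50 ≤ n) : n ^ 6 < 2 ^ n := by
  induction n, hn using Nat.le_induction with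
  | base => norm_num
  | succ n hn ih =>
    have h1 : 50 * (n + 1) ≤ 51 * n := by omega
    have h2 : (50 * (n + 1)) ^ 6 ≤ (51 * n) ^ 6 := Nat.pow_le_pow_left h1 6
    rw [mul_pow, mul_pow] at h2
    have h3 : (51:ℕ) ^ 6 * n ^ 6 ≤ 2 * 50 ^ 6 * n ^ 6 := by
      apply Nat.mul_le_mul_right
      norm_num
    have h4 : (50:ℕ) ^ 6 * (n + 1) ^ 6 ≤ 50 ^ 6 * (2 * n ^ 6) := by
      calc (50:ℕ) ^ 6 * (n + 1) ^ 6 ≤ 51 ^ 6 * n ^ 6 := h2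
        _ ≤ 2 * 50 ^ 6 * n ^ 6 := h3
        _ = 50 ^ 6 * (2 * n ^ 6) := by ring
    have h5 : (n + 1) ^ 6 ≤ 2 * n ^ 6 := Nat.le_of_mul_le_mul_left h4 (by norm_num)
    calc (n + 1) ^ 6 ≤ 2 * n ^ 6 := h5
      _ < 2 * 2 ^ n := by omega
      _ = 2 ^ (n + 1) := by rw [pow_succ]; ring

lemma path_indep_card (n : ℕ) (heven : Even n) (I' : Finset (Fin n))
    (h : ∀ a ∈ I', ∀ b ∈ I', ¬ (SimpleGraph.pathGraph n).Adj a b) : I'.card ≤ n / 2 := by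
  have hcard : I'.card ≤ (Finset.range (n / 2)).card := by
    apply Finset.card_le_card_of_injOn (fun a => a.val / 2)
    · intro a _
      rw [Finset.mem_coe, Finset.mem_range]
      obtain ⟨t, rfl⟩ := heven
      have := a.isLt
      dsimp only
      omega
    · intro a ha b hb hval
      by_contra hne
      have hval' : a.val / 2 = b.val / 2 := hval
      have hv : a.val ≠ b.val := fun he => hne (Fin.val_injective he)
      have : a.val + 1 = b.val ∨ b.val + 1 = a.val := by omega
      exact h a ha b hb (SimpleGraph.pathGraph_adj.mpr this)
  simpa using hcard

lemma flexible_mono {G : SimpleGraph V} {k : ℕ} {ε ε' : ℝ} (h : ε' ≤ ε)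
    (hf : Flexible G k ε) : Flexible G k ε' := by
  intro L hL D r hD hr
  obtain ⟨f, hf1, hf2⟩ := hf L hL D r hD hr
  exact ⟨f, hf1, le_trans (mul_le_mul_of_nonneg_right h (Nat.cast_nonneg _)) hf2⟩

lemma flexible_join (n k : ℕ) (hn : 50 ≤ n) (heven : Even n)
    (hk1 : n / 2 + 4 ≤ k) (hk2 : k ≤ 2 * n) :
    Flexible (joinCopies (pathGraph n)) k (1/4 : ℝ) := by
  classical
  intro L hL D r hD hrL
  set C : Finset ℕ := Finset.univ.biUnion L with hCdef
  have hLC : ∀ v, L v ⊆ C := fun v => Finset.subset_biUnion_of_mem L (Finset.mem_univ v)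
  set N := C.card with hNdef
  have hn0 : 0 < n := by omega
  have hkN : k ≤ N := by
    have h := Finset.card_le_card (hLC (Sum.inl ⟨0, hn0⟩))
    rw [hL] at h; exact h
  have hk0 : 2 ≤ k := by omega
  -- projections of the domain
  set DL : Finset (Fin n) := Finset.univ.filter (fun a => Sum.inl a ∈ D) with hDLdef
  set DR : Finset (Fin n) := Finset.univ.filter (fun a => Sum.inr a ∈ D) with hDRdef
  have hDsplit : D.card = DL.card + DR.card := by
    have hde : D = DL.image Sum.inl ∪ DR.image Sum.inr := by
      ext v
      cases v with
      | inl a => simp [hDLdef, hDRdef]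
      | inr a => simp [hDLdef, hDRdef]
    rw [hde, Finset.card_union_of_disjoint, Finset.card_image_of_injective _ Sum.inl_injective,
      Finset.card_image_of_injective _ Sum.inr_injective]
    rw [Finset.disjoint_left]
    intro v hv hv'
    rw [Finset.mem_image] at hv hv'
    obtain ⟨a, _, rfl⟩ := hv
    obtain ⟨b, _, hb⟩ := hv'
    cases hb
  -- sparse independent subsets
  obtain ⟨InL, hInLsub, hInLcard, hInLsp⟩ := exists_sparse_subset (DL.image Fin.val)
  obtain ⟨InR, hInRsub, hInRcard, hInRsp⟩ := exists_sparse_subset (DR.image Fin.val)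
  set IL : Finset (Fin n) := DL.filter (fun a => a.val ∈ InL) with hILdef
  set IR : Finset (Fin n) := DR.filter (fun a => a.val ∈ InR) with hIRdef
  have hILval : IL.image Fin.val = InL := by
    apply Finset.Subset.antisymm
    · intro x hx
      rw [Finset.mem_image] at hx
      obtain ⟨a, ha, rfl⟩ := hx
      exact (Finset.mem_filter.mp ha).2
    · intro x hx
      have h := hInLsub hx
      rw [Finset.mem_image] at h
      obtain ⟨a, ha, rfl⟩ := h
      exact Finset.mem_image.mpr ⟨a, Finset.mem_filter.mpr ⟨ha, hx⟩, rfl⟩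
  have hIRval : IR.image Fin.val = InR := by
    apply Finset.Subset.antisymm
    · intro x hx
      rw [Finset.mem_image] at hx
      obtain ⟨a, ha, rfl⟩ := hx
      exact (Finset.mem_filter.mp ha).2
    · intro x hx
      have h := hInRsub hx
      rw [Finset.mem_image] at h
      obtain ⟨a, ha, rfl⟩ := h
      exact Finset.mem_image.mpr ⟨a, Finset.mem_filter.mpr ⟨ha, hx⟩, rfl⟩
  have hILcard : DL.card ≤ 2 * IL.card := by
    rw [← Finset.card_image_of_injective IL Fin.val_injective, hILval,
      ← Finset.card_image_of_injective DL Fin.val_injective]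
    exact hInLcard
  have hIRcard : DR.card ≤ 2 * IR.card := by
    rw [← Finset.card_image_of_injective IR Fin.val_injective, hIRval,
      ← Finset.card_image_of_injective DR Fin.val_injective]
    exact hInRcard
  have hILsp : ∀ a ∈ IL, ∀ b ∈ IL, a ≠ b → a.val + 1 ≠ b.val := by
    intro a ha b hb hab
    refine hInLsp a.val ?_ b.val ?_ (fun h => hab (Fin.val_injective h))
    · rw [← hILval]; exact Finset.mem_image_of_mem _ ha
    · rw [← hILval]; exact Finset.mem_image_of_mem _ hb
  have hIRsp : ∀ a ∈ IR, ∀ b ∈ IR, a ≠ b → a.val + 1 ≠ b.val := by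
    intro a ha b hb hab
    refine hInRsp a.val ?_ b.val ?_ (fun h => hab (Fin.val_injective h))
    · rw [← hIRval]; exact Finset.mem_image_of_mem _ ha
    · rw [← hIRval]; exact Finset.mem_image_of_mem _ hb
  have hILD : ∀ a ∈ IL, Sum.inl a ∈ D := by
    intro a ha
    have h := (Finset.mem_filter.mp ha).1
    exact (Finset.mem_filter.mp h).2
  have hIRD : ∀ a ∈ IR, Sum.inr a ∈ D := by
    intro a ha
    have h := (Finset.mem_filter.mp ha).1
    exact (Finset.mem_filter.mp h).2
  -- the counting function
  set X : Finset ℕ → ℕ := fun S =>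
    (IL.filter (fun a => r (Sum.inl a) ∈ S)).card +
    (IR.filter (fun a => r (Sum.inr a) ∉ S)).card with hXdef
  have hX : ∀ S ⊆ C, X S + X (C \ S) = IL.card + IR.card := by
    intro S hS
    have hrCL : ∀ a ∈ IL, r (Sum.inl a) ∈ C := fun a ha => hLC _ (hrL _ (hILD a ha))
    have hrCR : ∀ a ∈ IR, r (Sum.inr a) ∈ C := fun a ha => hLC _ (hrL _ (hIRD a ha))
    have e1 : IL.filter (fun a => r (Sum.inl a) ∈ C \ S)
        = IL.filter (fun a => ¬ r (Sum.inl a) ∈ S) := by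
      apply Finset.filter_congr
      intro a ha
      simp [Finset.mem_sdiff, hrCL a ha]
    have e2 : IR.filter (fun a => r (Sum.inr a) ∉ C \ S)
        = IR.filter (fun a => r (Sum.inr a) ∈ S) := by
      apply Finset.filter_congr
      intro a ha
      simp [Finset.mem_sdiff, hrCR a ha]
    have f1 := Finset.card_filter_add_card_filter_not
      (s := IL) (p := fun a => r (Sum.inl a) ∈ S)
    have f2 := Finset.card_filter_add_card_filter_not
      (s := IR) (p := fun a => r (Sum.inr a) ∈ S)
    simp only [hXdef, e1, e2]
    omega
  -- good sets (many requests satisfiable)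
  set Good1 := C.powerset.filter (fun S => IL.card + IR.card ≤ 2 * X S) with hG1def
  have hGood1 : 2 ^ N ≤ 2 * Good1.card := pairing_count C _ X hX
  -- bad sets
  set badP : (Fin n ⊕ Fin n) → Finset ℕ → Prop := fun v S =>
    Sum.elim (fun a => (L (Sum.inl a) ∩ S).card ≤ 2)
             (fun a => (L (Sum.inr a) \ S).card ≤ 2) v with hbadPdef
  set Bad := C.powerset.filter (fun S => ∃ v, badP v S) with hBaddef
  have hBadcard : Bad.card ≤ (n + n) * (k * k * 2 ^ (N - k)) := by
    have hsub : Bad ⊆ Finset.univ.biUnion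
        (fun v : Fin n ⊕ Fin n => C.powerset.filter (fun S => badP v S)) := by
      intro S hS
      rw [hBaddef, Finset.mem_filter] at hS
      obtain ⟨h1, v, h2⟩ := hS
      exact Finset.mem_biUnion.mpr ⟨v, Finset.mem_univ v, Finset.mem_filter.mpr ⟨h1, h2⟩⟩
    calc Bad.card ≤ _ := Finset.card_le_card hsub
      _ ≤ ∑ v : Fin n ⊕ Fin n, (C.powerset.filter (fun S => badP v S)).card :=
          Finset.card_biUnion_le
      _ ≤ ∑ _v : Fin n ⊕ Fin n, (k * k * 2 ^ (N - k)) := by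
          apply Finset.sum_le_sum
          intro v _
          have hbnd : ∀ (Lv : Finset ℕ), Lv.card = k → Lv ⊆ C →
              ((Lv.powerset.filter (fun T => T.card ≤ 2)).card * 2 ^ (C.card - Lv.card))
                ≤ k * k * 2 ^ (N - k) := by
            intro Lv hcard hsubC
            rw [hcard]
            exact Nat.mul_le_mul_right _ (by
              have := small_subsets_card Lv (by omega)
              rw [hcard] at this
              exact this)
          cases v with
          | inl a =>
            have h := badL_count C (L (Sum.inl a)) (hLC _)
            have h2 := hbnd (L (Sum.inl a)) (hL _) (hLC _)
            have he : C.powerset.filter (fun S => badP (Sum.inl a) S)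
                = C.powerset.filter (fun S => (L (Sum.inl a) ∩ S).card ≤ 2) := by
              ext S
              simp only [Finset.mem_filter, hbadPdef, Sum.elim_inl]
            rw [he]
            exact le_trans h h2
          | inr a =>
            have h := badR_count C (L (Sum.inr a)) (hLC _)
            have h2 := hbnd (L (Sum.inr a)) (hL _) (hLC _)
            have he : C.powerset.filter (fun S => badP (Sum.inr a) S)
                = C.powerset.filter (fun S => (L (Sum.inr a) \ S).card ≤ 2) := by
              ext S
              simp only [Finset.mem_filter, hbadPdef, Sum.elim_inr]
            rw [he]
            exact le_trans h h2
      _ = (n + n) * (k * k * 2 ^ (N - k)) := by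
          rw [Finset.sum_const, Finset.card_univ]
          simp [Fintype.card_sum, mul_comm]
  -- the arithmetic bound
  have harith : (n + n) * (k * k * 2 ^ (N - k)) < 2 ^ (N - 1) := by
    have hp : 4 * n * (k * k) < 2 ^ k := by
      have h6 : n ^ 6 < 2 ^ n := pow6_lt_two_pow hn
      have he2 : n / 2 * 2 = n := by obtain ⟨t, rfl⟩ := heven; omega
      have h3 : n ^ 3 < 2 ^ (n / 2) := by
        by_contra hcon
        push_neg at hcon
        have := Nat.pow_le_pow_left hcon 2
        rw [← pow_mul, ← pow_mul, he2] at this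
        norm_num at this
        omega
      calc 4 * n * (k * k) ≤ 4 * n * ((2*n) * (2*n)) := by
            apply Nat.mul_le_mul_left
            exact Nat.mul_le_mul hk2 hk2
        _ = 16 * n ^ 3 := by ring
        _ < 16 * 2 ^ (n/2) := by omega
        _ = 2 ^ (n/2 + 4) := by rw [pow_add]; ring
        _ ≤ 2 ^ k := Nat.pow_le_pow_right (by norm_num) (by omega)
    have hsplit2 : 2 ^ (N - 1) = 2 ^ (N - k) * 2 ^ (k - 1) := by
      rw [← pow_add]; congr 1; omega
    have h2k : 2 * 2 ^ (k-1) = 2 ^ k := by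
      rw [← pow_succ']; congr 1; omega
    calc (n+n) * (k*k*2^(N-k)) = (2*n*(k*k)) * 2^(N-k) := by ring
      _ < 2^(k-1) * 2^(N-k) := by
          apply Nat.mul_lt_mul_of_lt_of_le _ le_rfl (Nat.pow_pos (by norm_num))
          have hq : 2 * (2*n*(k*k)) = 4*n*(k*k) := by ring
          omega
      _ = 2^(N-1) := by rw [hsplit2]; ring
  -- existence of a good S
  have hex : ∃ S, S ∈ Good1 ∧ ¬ ∃ v, badP v S := by
    by_contra hcon
    push_neg at hcon
    have hsub : Good1 ⊆ Bad := by
      intro S hS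
      rw [hBaddef, Finset.mem_filter]
      exact ⟨(Finset.mem_filter.mp hS).1, hcon S hS⟩
    have h1 := Finset.card_le_card hsub
    have h2N : 2 ^ N = 2 * 2 ^ (N - 1) := by
      rw [← pow_succ']; congr 1; omega
    omega
  obtain ⟨S, hSG, hSgood⟩ := hex
  have hSsub : S ⊆ C := Finset.mem_powerset.mp (Finset.mem_filter.mp hSG).1
  have hSX : IL.card + IR.card ≤ 2 * X S := (Finset.mem_filter.mp hSG).2
  have hgoodL : ∀ a : Fin n, 3 ≤ (L (Sum.inl a) ∩ S).card := by
    intro a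
    have h : ¬ badP (Sum.inl a) S := fun h => hSgood ⟨_, h⟩
    simp only [hbadPdef, Sum.elim_inl] at h
    omega
  have hgoodR : ∀ a : Fin n, 3 ≤ (L (Sum.inr a) \ S).card := by
    intro a
    have h : ¬ badP (Sum.inr a) S := fun h => hSgood ⟨_, h⟩
    simp only [hbadPdef, Sum.elim_inr] at h
    omega
  -- build the two path colorings
  set ℓL : ℕ → Finset ℕ := fun i => if h : i < n then L (Sum.inl ⟨i, h⟩) ∩ S else ∅ with hℓLdef
  set cL : ℕ → ℕ := fun i => if h : i < n then r (Sum.inl ⟨i, h⟩) else 0 with hcLdef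
  set JL : ℕ → Prop :=
    fun i => ∃ h : i < n, (⟨i, h⟩ : Fin n) ∈ IL ∧ r (Sum.inl ⟨i, h⟩) ∈ S with hJLdef
  set ℓR : ℕ → Finset ℕ := fun i => if h : i < n then L (Sum.inr ⟨i, h⟩) \ S else ∅ with hℓRdef
  set cR : ℕ → ℕ := fun i => if h : i < n then r (Sum.inr ⟨i, h⟩) else 0 with hcRdef
  set JR : ℕ → Prop :=
    fun i => ∃ h : i < n, (⟨i, h⟩ : Fin n) ∈ IR ∧ r (Sum.inr ⟨i, h⟩) ∉ S with hJRdef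
  have specL := buildCol_spec n ℓL JL cL
    (by
      intro i hi
      simp only [hℓLdef]
      rw [dif_pos hi]
      exact hgoodL _)
    (by
      intro i hi
      obtain ⟨h, hm, hs⟩ := hi
      simp only [hℓLdef, hcLdef]
      rw [dif_pos h, dif_pos h]
      exact Finset.mem_inter.mpr ⟨hrL _ (hILD _ hm), hs⟩)
    (by
      intro i hJi hJi1
      obtain ⟨h, hm, _⟩ := hJi
      obtain ⟨h', hm', _⟩ := hJi1
      exact hILsp _ hm _ hm' (fun he => by simp [Fin.ext_iff] at he) rfl)
  have specR := buildCol_spec n ℓR JR cR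
    (by
      intro i hi
      simp only [hℓRdef]
      rw [dif_pos hi]
      exact hgoodR _)
    (by
      intro i hi
      obtain ⟨h, hm, hs⟩ := hi
      simp only [hℓRdef, hcRdef]
      rw [dif_pos h, dif_pos h]
      exact Finset.mem_sdiff.mpr ⟨hrL _ (hIRD _ hm), hs⟩)
    (by
      intro i hJi hJi1
      obtain ⟨h, hm, _⟩ := hJi
      obtain ⟨h', hm', _⟩ := hJi1
      exact hIRsp _ hm _ hm' (fun he => by simp [Fin.ext_iff] at he) rfl)
  set gL := buildCol ℓL JL cL with hgLdef
  set gR := buildCol ℓR JR cR with hgRdef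
  set f : Fin n ⊕ Fin n → ℕ :=
    Sum.elim (fun a : Fin n => gL a.val) (fun a : Fin n => gR a.val) with hfdef
  have hmemL : ∀ a : Fin n, gL a.val ∈ L (Sum.inl a) ∩ S := by
    intro a
    have h := specL.1 a.val a.isLt
    simp only [hℓLdef] at h
    rw [dif_pos a.isLt, Fin.eta] at h
    exact h
  have hmemR : ∀ a : Fin n, gR a.val ∈ L (Sum.inr a) \ S := by
    intro a
    have h := specR.1 a.val a.isLt
    simp only [hℓRdef] at h
    rw [dif_pos a.isLt, Fin.eta] at h
    exact h
  refine ⟨f, ⟨?_, ?_⟩, ?_⟩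
  · -- membership
    intro v
    cases v with
    | inl a => exact Finset.mem_of_mem_inter_left (hmemL a)
    | inr a => exact (Finset.mem_sdiff.mp (hmemR a)).1
  · -- properness
    intro u w huw
    cases u with
    | inl a =>
      cases w with
      | inl b =>
        have hpw : (pathGraph n).Adj a b := huw
        rw [SimpleGraph.pathGraph_adj] at hpw
        show gL a.val ≠ gL b.val
        rcases hpw with h | h
        · rw [← h]
          exact specL.2.1 a.val (by rw [h]; exact b.isLt)
        · rw [← h]
          exact (specL.2.1 b.val (by rw [h]; exact a.isLt)).symm
      | inr b =>
        show gL a.val ≠ gR b.val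
        intro he
        have h1 := (Finset.mem_inter.mp (hmemL a)).2
        have h2 := (Finset.mem_sdiff.mp (hmemR b)).2
        rw [he] at h1
        exact h2 h1
    | inr a =>
      cases w with
      | inl b =>
        show gR a.val ≠ gL b.val
        intro he
        have h1 := (Finset.mem_inter.mp (hmemL b)).2
        have h2 := (Finset.mem_sdiff.mp (hmemR a)).2
        rw [← he] at h1
        exact h2 h1
      | inr b =>
        have hpw : (pathGraph n).Adj a b := huw
        rw [SimpleGraph.pathGraph_adj] at hpw
        show gR a.val ≠ gR b.val
        rcases hpw with h | h
        · rw [← h]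
          exact specR.2.1 a.val (by rw [h]; exact b.isLt)
        · rw [← h]
          exact (specR.2.1 b.val (by rw [h]; exact a.isLt)).symm
  · -- request count
    set TL := (IL.filter (fun a => r (Sum.inl a) ∈ S)).image
      (Sum.inl : Fin n → Fin n ⊕ Fin n) with hTLdef
    set TR := (IR.filter (fun a => r (Sum.inr a) ∉ S)).image
      (Sum.inr : Fin n → Fin n ⊕ Fin n) with hTRdef
    have hTsub : TL ∪ TR ⊆ D.filter (fun v => f v = r v) := by
      intro v hv
      rcases Finset.mem_union.mp hv with hv | hv
      · rw [hTLdef, Finset.mem_image] at hv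
        obtain ⟨a, ha, rfl⟩ := hv
        obtain ⟨haIL, hrS⟩ := Finset.mem_filter.mp ha
        rw [Finset.mem_filter]
        refine ⟨hILD _ haIL, ?_⟩
        show gL a.val = r (Sum.inl a)
        have hJ : JL a.val := ⟨a.isLt, by rw [Fin.eta]; exact haIL, by rw [Fin.eta]; exact hrS⟩
        rw [specL.2.2 a.val hJ]
        simp only [hcLdef]
        rw [dif_pos a.isLt, Fin.eta]
      · rw [hTRdef, Finset.mem_image] at hv
        obtain ⟨a, ha, rfl⟩ := hv
        obtain ⟨haIR, hrS⟩ := Finset.mem_filter.mp ha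
        rw [Finset.mem_filter]
        refine ⟨hIRD _ haIR, ?_⟩
        show gR a.val = r (Sum.inr a)
        have hJ : JR a.val := ⟨a.isLt, by rw [Fin.eta]; exact haIR, by rw [Fin.eta]; exact hrS⟩
        rw [specR.2.2 a.val hJ]
        simp only [hcRdef]
        rw [dif_pos a.isLt, Fin.eta]
    have hTcard : X S ≤ (D.filter (fun v => f v = r v)).card := by
      have hdisj : Disjoint TL TR := by
        rw [Finset.disjoint_left]
        intro v hvl hvr
        rw [hTLdef, Finset.mem_image] at hvl
        rw [hTRdef, Finset.mem_image] at hvr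
        obtain ⟨a, _, rfl⟩ := hvl
        obtain ⟨b, _, hb⟩ := hvr
        cases hb
      have hcu : (TL ∪ TR).card = X S := by
        rw [Finset.card_union_of_disjoint hdisj, hTLdef, hTRdef,
          Finset.card_image_of_injective _ Sum.inl_injective,
          Finset.card_image_of_injective _ Sum.inr_injective]
      rw [← hcu]
      exact Finset.card_le_card hTsub
    have hnum : D.card ≤ 4 * X S := by omega
    calc (1/4 : ℝ) * D.card ≤ (1/4 : ℝ) * (4 * X S) := by
          apply mul_le_mul_of_nonneg_left _ (by norm_num)
          exact_mod_cast hnum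
      _ = (X S : ℝ) := by ring
      _ ≤ _ := by exact_mod_cast hTcard

end Core

/-- for even n ≥ 50, χ_flex(P_n ∨ P_n) ≤ ⌈n/2 + ln n⌉. -/

theorem stmt19 (n : ℕ) (heven : Even n) (hn : 50 ≤ n) :
    flexNumber (joinCopies (pathGraph n)) ≤ ⌈(n : ℝ) / 2 + Real.log n⌉₊ ∧
    Flexible (joinCopies (pathGraph n)) ⌈(n : ℝ) / 2 + Real.log n⌉₊
      ((1 : ℝ) / 4) := by
  classical
  set G := joinCopies (pathGraph n) with hGdef
  set k := ⌈(n : ℝ) / 2 + Real.log n⌉₊ with hkdef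
  have hn0 : 0 < n := by omega
  have hnR : (50:ℝ) ≤ (n:ℝ) := by exact_mod_cast hn
  have hnR0 : (0:ℝ) < (n:ℝ) := by linarith
  have hlog3 : (3:ℝ) < Real.log n := by
    have h50 : (3:ℝ) < Real.log 50 := by
      rw [show (3:ℝ) = Real.log (Real.exp 3) by rw [Real.log_exp]]
      apply Real.log_lt_log (Real.exp_pos 3)
      have h1 : Real.exp 3 = (Real.exp 1)^3 := by
        rw [← Real.exp_nat_mul]; norm_num
      rw [h1]
      have h2 := Real.exp_one_lt_d9
      have h3 : Real.exp 1 ^ 3 < 2.7182818286 ^ 3 := by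
        apply pow_lt_pow_left₀ h2 (Real.exp_pos 1).le
        norm_num
      calc Real.exp 1 ^ 3 < 2.7182818286 ^ 3 := h3
        _ < 50 := by norm_num
    calc (3:ℝ) < Real.log 50 := h50
      _ ≤ Real.log n := Real.log_le_log (by norm_num) hnR
  have hhalf : ((n/2 : ℕ) : ℝ) = (n:ℝ)/2 := by
    obtain ⟨t, rfl⟩ := heven
    have : (t+t)/2 = t := by omega
    rw [this]
    push_cast
    ring
  have hk1 : n / 2 + 4 ≤ k := by
    have hlt : ((n / 2 + 3 : ℕ) : ℝ) < (n:ℝ)/2 + Real.log n := by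
      push_cast [hhalf]
      linarith
    have := Nat.lt_ceil.mpr hlt
    omega
  have hk2 : k ≤ 2 * n := by
    rw [hkdef]
    apply Nat.ceil_le.mpr
    have := Real.log_le_sub_one_of_pos hnR0
    push_cast
    linarith
  have hflex : Flexible G k (1/4 : ℝ) := flexible_join n k hn heven hk1 hk2
  have hhall : (4:ℝ) ≤ hallRatio G := by
    have huniv_card : (Finset.univ : Finset (Fin n ⊕ Fin n)).card = n + n := by
      simp [Fintype.card_sum]
    have hα1 : ∀ T : Finset (Fin n ⊕ Fin n), T.Nonempty → 1 ≤ indepNumOn G T := by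
      intro T hT
      obtain ⟨x, hx⟩ := hT
      unfold indepNumOn
      have hmem : ({x} : Finset (Fin n ⊕ Fin n)) ∈
          T.powerset.filter (fun I => ∀ u ∈ I, ∀ w ∈ I, ¬ G.Adj u w) := by
        simp only [Finset.mem_filter, Finset.mem_powerset]
        refine ⟨Finset.singleton_subset_iff.mpr hx, ?_⟩
        intro u hu w hw
        rw [Finset.mem_singleton] at hu hw
        subst hu; subst hw
        exact G.irrefl
      have := Finset.le_sup (f := Finset.card) hmem
      simpa using this
    have hα2 : indepNumOn G Finset.univ ≤ n / 2 := by
      unfold indepNumOn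
      apply Finset.sup_le
      intro I hI
      simp only [Finset.mem_filter] at hI
      obtain ⟨_, hind⟩ := hI
      by_cases hexl : ∃ a : Fin n, Sum.inl a ∈ I
      · by_cases hexr : ∃ b : Fin n, Sum.inr b ∈ I
        · obtain ⟨a, ha⟩ := hexl
          obtain ⟨b, hb⟩ := hexr
          exact absurd trivial (hind _ ha _ hb)
        · push_neg at hexr
          set I' : Finset (Fin n) := Finset.univ.filter (fun a => Sum.inl a ∈ I) with hI'def
          have hIe : I = I'.image Sum.inl := by
            ext v
            cases v with
            | inl a => simp [hI'def]
            | inr a => simp [hI'def, hexr a]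
          rw [hIe, Finset.card_image_of_injective _ Sum.inl_injective]
          apply path_indep_card n heven
          intro a ha b hb hadj
          have ha' : Sum.inl a ∈ I := (Finset.mem_filter.mp ha).2
          have hb' : Sum.inl b ∈ I := (Finset.mem_filter.mp hb).2
          exact hind _ ha' _ hb' hadj
      · push_neg at hexl
        set I' : Finset (Fin n) := Finset.univ.filter (fun a => Sum.inr a ∈ I) with hI'def
        have hIe : I = I'.image Sum.inr := by
          ext v
          cases v with
          | inl a => simp [hI'def, hexl a]
          | inr a => simp [hI'def]
        rw [hIe, Finset.card_image_of_injective _ Sum.inr_injective]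
        apply path_indep_card n heven
        intro a ha b hb hadj
        have ha' : Sum.inr a ∈ I := (Finset.mem_filter.mp ha).2
        have hb' : Sum.inr b ∈ I := (Finset.mem_filter.mp hb).2
        exact hind _ ha' _ hb' hadj
    have hne : (Finset.univ : Finset (Fin n ⊕ Fin n)).Nonempty :=
      ⟨Sum.inl ⟨0, hn0⟩, Finset.mem_univ _⟩
    have hα1u := hα1 Finset.univ hne
    set x₀ : ℝ := ((Finset.univ : Finset (Fin n ⊕ Fin n)).card : ℝ) /
      (indepNumOn G Finset.univ : ℝ) with hx₀def
    have hmem : x₀ ∈ {x : ℝ | ∃ T : Finset (Fin n ⊕ Fin n), T.Nonempty ∧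
        x = (T.card : ℝ) / (indepNumOn G T : ℝ)} := ⟨Finset.univ, hne, rfl⟩
    have hbdd : BddAbove {x : ℝ | ∃ T : Finset (Fin n ⊕ Fin n), T.Nonempty ∧
        x = (T.card : ℝ) / (indepNumOn G T : ℝ)} := by
      refine ⟨((n + n : ℕ) : ℝ), ?_⟩
      rintro x ⟨T, hT, rfl⟩
      calc (T.card : ℝ) / (indepNumOn G T : ℝ) ≤ (T.card : ℝ) := by
            apply div_le_self (Nat.cast_nonneg _)
            exact_mod_cast hα1 T hT
        _ ≤ ((n + n : ℕ) : ℝ) := by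
            rw [← huniv_card]
            exact_mod_cast Finset.card_le_card (Finset.subset_univ T)
    have h4x : (4:ℝ) ≤ x₀ := by
      rw [hx₀def, huniv_card, le_div_iff₀ (by exact_mod_cast hα1u)]
      have : 4 * indepNumOn G Finset.univ ≤ n + n := by
        have h := hα2
        omega
      exact_mod_cast this
    calc (4:ℝ) ≤ x₀ := h4x
      _ ≤ hallRatio G := le_csSup hbdd hmem
  refine ⟨?_, hflex⟩
  apply Nat.sInf_le
  have hle : 1 / hallRatio G ≤ (1/4 : ℝ) :=
    one_div_le_one_div_of_le (by norm_num) hhall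
  exact flexible_mono hle hflex
end
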